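/- arXiv:2311.00680 — 9 statements merged into one kernel-verified Lean document; each statement's English description precedes it below -/
import Mathlib

section
/- Let 0 ≤ δ < 1 and f(z) = 1/z + δz. Then f maps the open unit disc minus the origin injectively into the complement of the closed elliptical set K_δ = {x+iy : x²/(1+δ)² + y²/(1-δ)² ≤ 1}; that is, for z, w in 𝔻 \ {0}, f(z) = f(w) implies z = w, and f(z) ∉ K_δ for all z ∈ 𝔻 \ {0}. -/
/-!
Injectivity: `f z - f w = (z - w) (δ z w - 1) / (z w)` and `|δ z w| < 1` on the punctured disc.
Exterior: for `z = r e^{iθ}`, `f z = (1/r + δ r) cos θ - i (1/r - δ r) sin θ` lies on an ellipse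
whose semi-axes exceed `1 + δ` and `1 - δ`, because `r < 1`. In squared form, with `s = r²`, both
`(1 ± δ s)² - s (1 ± δ)² = (1 - s) (1 - δ² s)` are positive.
-/

open Complex

theorem one_div_add_mul_sub_one_div_add_mul {K : Type*} [Field K] (δ : K) {z w : K}
    (hz : z ≠ 0) (hw : w ≠ 0) :
    (1 / z + δ * z) - (1 / w + δ * w) = (z - w) * (δ * z * w - 1) / (z * w) := by
  field_simp
  ring

theorem injOn_one_div_add_mul {𝕜 : Type*} [NormedField 𝕜] {δ : 𝕜} (hδ : ‖δ‖ ≤ 1) :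
    Set.InjOn (fun z : 𝕜 ↦ 1 / z + δ * z) (Metric.ball 0 1 \ {0}) := by
  rintro z ⟨hz, hz0 : z ≠ 0⟩ w ⟨hw, hw0 : w ≠ 0⟩ h
  rw [mem_ball_zero_iff] at hz hw
  have hδzw : δ * z * w - 1 ≠ 0 := by
    rw [sub_ne_zero]
    refine ne_of_apply_ne norm (ne_of_lt ?_)
    rw [norm_mul, norm_mul, norm_one]
    calc ‖δ‖ * ‖z‖ * ‖w‖ ≤ 1 * ‖z‖ * ‖w‖ := by gcongr
      _ < 1 := by nlinarith [norm_nonneg z, norm_nonneg w]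
  have hdiff := one_div_add_mul_sub_one_div_add_mul δ hz0 hw0
  rw [sub_eq_zero.2 h, eq_comm, div_eq_zero_iff, mul_eq_zero] at hdiff
  simpa [sub_eq_zero, hδzw, hz0, hw0] using hdiff

theorem re_one_div_add_ofReal_mul (z : ℂ) (δ : ℝ) :
    (1 / z + δ * z).re = z.re * (1 + δ * normSq z) / normSq z := by
  rcases eq_or_ne z 0 with rfl | hz
  · simp
  have : normSq z ≠ 0 := (normSq_pos.2 hz).ne'
  simp only [one_div, add_re, inv_re, re_ofReal_mul]
  field_simp

theorem im_one_div_add_ofReal_mul (z : ℂ) (δ : ℝ) :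
    (1 / z + δ * z).im = -(z.im * (1 - δ * normSq z) / normSq z) := by
  rcases eq_or_ne z 0 with rfl | hz
  · simp
  have : normSq z ≠ 0 := (normSq_pos.2 hz).ne'
  simp only [one_div, add_im, inv_im, im_ofReal_mul]
  field_simp
  ring

theorem mul_one_add_sq_lt_one_add_mul_sq {s δ : ℝ} (hs0 : 0 ≤ s) (hs1 : s < 1)
    (hδ : δ ^ 2 ≤ 1) : s * (1 + δ) ^ 2 < (1 + δ * s) ^ 2 := by
  have key : (1 + δ * s) ^ 2 - s * (1 + δ) ^ 2 = (1 - s) * (1 - δ ^ 2 * s) := by ring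
  have : 0 < 1 - δ ^ 2 * s := by nlinarith
  nlinarith

theorem one_lt_mul_add_mul {p q a b : ℝ} (hp : 0 ≤ p) (hq : 0 ≤ q) (hpq : p + q = 1)
    (ha : 1 < a) (hb : 1 < b) : 1 < p * a + q * b :=
  calc 1 < min a b := lt_min ha hb
    _ = p * min a b + q * min a b := by rw [← add_mul, hpq, one_mul]
    _ ≤ p * a + q * b := by gcongr <;> simp

theorem one_lt_re_sq_div_add_im_sq_div {δ : ℝ} (hδ0 : -1 < δ) (hδ1 : δ < 1) {z : ℂ}
    (hz : ‖z‖ < 1) (hz0 : z ≠ 0) :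
    1 < (1 / z + δ * z).re ^ 2 / (1 + δ) ^ 2 + (1 / z + δ * z).im ^ 2 / (1 - δ) ^ 2 := by
  have hs0 : 0 < normSq z := normSq_pos.2 hz0
  have hs1 : normSq z < 1 := by rw [normSq_eq_norm_sq]; nlinarith [norm_nonneg z]
  have hsum : z.re ^ 2 / normSq z + z.im ^ 2 / normSq z = 1 := by
    rw [← add_div, div_eq_one_iff_eq hs0.ne', normSq_apply]; ring
  rw [re_one_div_add_ofReal_mul, im_one_div_add_ofReal_mul]
  generalize normSq z = s at *
  have hδ_add : 1 + δ ≠ 0 := by linarith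
  have hδ_sub : 1 - δ ≠ 0 := by linarith
  have hA : 1 < (1 + δ * s) ^ 2 / (s * (1 + δ) ^ 2) := by
    rw [one_lt_div (by positivity)]
    exact mul_one_add_sq_lt_one_add_mul_sq hs0.le hs1 (by nlinarith)
  have hB : 1 < (1 - δ * s) ^ 2 / (s * (1 - δ) ^ 2) := by
    rw [one_lt_div (by positivity), sub_eq_add_neg, sub_eq_add_neg, ← neg_mul]
    exact mul_one_add_sq_lt_one_add_mul_sq hs0.le hs1 (by nlinarith)
  calc
    1 < z.re ^ 2 / s * ((1 + δ * s) ^ 2 / (s * (1 + δ) ^ 2)) +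
        z.im ^ 2 / s * ((1 - δ * s) ^ 2 / (s * (1 - δ) ^ 2)) :=
      one_lt_mul_add_mul (by positivity) (by positivity) hsum hA hB
    _ = _ := by field_simp

/-- For `0 ≤ δ < 1`, the map `f(z) = 1/z + δz` maps `𝔻 \ {0}` injectively into the
complement of the closed elliptical set `K_δ`. -/
theorem zhukovskii_injective_into_complement_of_Kdelta (δ : ℝ) (hδ0 : 0 ≤ δ) (hδ1 : δ < 1) :
    (∀ z w : ℂ, ‖z‖ < 1 → z ≠ 0 → ‖w‖ < 1 → w ≠ 0 →
        1 / z + (δ : ℂ) * z = 1 / w + (δ : ℂ) * w → z = w) ∧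
      (∀ z : ℂ, ‖z‖ < 1 → z ≠ 0 →
        (1 / z + (δ : ℂ) * z) ∉
          {c : ℂ | c.re ^ 2 / (1 + δ) ^ 2 + c.im ^ 2 / (1 - δ) ^ 2 ≤ 1}) := by
  have hδ : ‖(δ : ℂ)‖ ≤ 1 := by
    rw [norm_real, Real.norm_of_nonneg hδ0]
    exact hδ1.le
  refine ⟨fun z w hz hz0 hw hw0 h ↦ ?_, fun z hz hz0 ↦ ?_⟩
  · exact injOn_one_div_add_mul hδ ⟨mem_ball_zero_iff.2 hz, hz0⟩ ⟨mem_ball_zero_iff.2 hw, hw0⟩ h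
  · exact (one_lt_re_sq_div_add_im_sq_div (by linarith) hδ1 hz hz0).not_ge
end

section
/- Let 0 < δ < 1 and let π(λ) = λ + δ/λ. Then for any s ∈ ℂ, the point s lies in the open elliptical region G_δ = {x+iy : x²/(1+δ)² + y²/(1-δ)² < 1} if and only if (s, δ) lies in the symmetrized bidisc G = {(z+w, zw) : z, w ∈ ℂ, |z| < 1, |w| < 1}. -/
/-!
By Vieta, `(s, p)` lies in the symmetrized bidisc iff both roots of `λ² - sλ + p` lie in the
unit disc. For `s = z + w`, `p = z * w` one has `s - s̄ p = z (1 - |w|²) + w (1 - |z|²)`, and with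
`a = |z|`, `b = |w|` the identity `1 - a²b² - a(1 - b²) - b(1 - a²) = (1 - ab)(1 - a)(1 - b)` turns
the triangle inequality into the Agler–Young criterion `|s - s̄ p| < 1 - |p|²`, in both
directions. For real `p = δ`, `|s - δ s̄|² = (1 - δ)² x² + (1 + δ)² y²`, which is the ellipse.
-/

open Complex ComplexConjugate

def symmetrizedBidisc : Set (ℂ × ℂ) :=
  {p : ℂ × ℂ | ∃ z w : ℂ, ‖z‖ < 1 ∧ ‖w‖ < 1 ∧ p = (z + w, z * w)}

lemma add_sub_conj_add_mul_mul (z w : ℂ) :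
    z + w - conj (z + w) * (z * w) = z * ((1 - ‖w‖ ^ 2 : ℝ) : ℂ) + w * ((1 - ‖z‖ ^ 2 : ℝ) : ℂ) := by
  push_cast
  rw [← mul_conj', ← mul_conj', map_add]
  ring

lemma norm_add_sub_conj_add_mul_mul_lt {z w : ℂ} (hz : ‖z‖ < 1) (hw : ‖w‖ < 1) :
    ‖z + w - conj (z + w) * (z * w)‖ < 1 - ‖z * w‖ ^ 2 := by
  have ha := norm_nonneg z
  have hb := norm_nonneg w
  have hab : ‖z‖ * ‖w‖ < 1 := by nlinarith
  calc ‖z + w - conj (z + w) * (z * w)‖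
      ≤ ‖z‖ * (1 - ‖w‖ ^ 2) + ‖w‖ * (1 - ‖z‖ ^ 2) := by
        rw [add_sub_conj_add_mul_mul]
        refine (norm_add_le _ _).trans_eq ?_
        rw [norm_mul, norm_mul, norm_real, norm_real, Real.norm_of_nonneg (by nlinarith),
          Real.norm_of_nonneg (by nlinarith)]
    _ < 1 - ‖z * w‖ ^ 2 := by
        rw [norm_mul]
        nlinarith [mul_pos (mul_pos (sub_pos.2 hab) (sub_pos.2 hz)) (sub_pos.2 hw)]

lemma norm_lt_one_of_norm_add_sub_conj_add_mul_mul_lt {z w : ℂ} (hwz : ‖w‖ ≤ ‖z‖)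
    (h : ‖z + w - conj (z + w) * (z * w)‖ < 1 - ‖z * w‖ ^ 2) : ‖z‖ < 1 := by
  by_contra! hz
  have hb := norm_nonneg w
  rw [norm_mul] at h
  have hab : ‖z‖ * ‖w‖ < 1 := by nlinarith [norm_nonneg (z + w - conj (z + w) * (z * w))]
  have hw : ‖w‖ < 1 := by nlinarith
  have htri : ‖z‖ * (1 - ‖w‖ ^ 2) ≤ ‖z + w - conj (z + w) * (z * w)‖ + ‖w‖ * (‖z‖ ^ 2 - 1) := by
    have := norm_sub_le (z * ((1 - ‖w‖ ^ 2 : ℝ) : ℂ) + w * ((1 - ‖z‖ ^ 2 : ℝ) : ℂ))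
      (w * ((1 - ‖z‖ ^ 2 : ℝ) : ℂ))
    rwa [add_sub_cancel_right, ← add_sub_conj_add_mul_mul, norm_mul, norm_mul, norm_real,
      norm_real, Real.norm_of_nonneg (by nlinarith), Real.norm_of_nonpos (by nlinarith),
      neg_sub] at this
  nlinarith [mul_nonneg (mul_nonneg (sub_nonneg.2 hab.le) (sub_nonneg.2 hz)) (sub_pos.2 hw).le]

lemma exists_add_eq_and_mul_eq (s p : ℂ) : ∃ z w : ℂ, z + w = s ∧ z * w = p := by
  obtain ⟨u, hu⟩ := IsAlgClosed.exists_pow_nat_eq (s ^ 2 - 4 * p) two_pos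
  exact ⟨(s + u) / 2, (s - u) / 2, by ring, by linear_combination (-1 / 4 : ℂ) * hu⟩

theorem mem_symmetrizedBidisc_iff (s p : ℂ) :
    (s, p) ∈ symmetrizedBidisc ↔ ‖s - conj s * p‖ < 1 - ‖p‖ ^ 2 := by
  constructor
  · rintro ⟨z, w, hz, hw, hzw⟩
    obtain ⟨rfl, rfl⟩ := Prod.mk.inj hzw
    exact norm_add_sub_conj_add_mul_mul_lt hz hw
  · intro h
    obtain ⟨z, w, rfl, rfl⟩ := exists_add_eq_and_mul_eq s p
    rcases le_total ‖w‖ ‖z‖ with hwz | hzw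
    · have hz := norm_lt_one_of_norm_add_sub_conj_add_mul_mul_lt hwz h
      exact ⟨z, w, hz, hwz.trans_lt hz, rfl⟩
    · rw [add_comm z, mul_comm z] at h ⊢
      have hw := norm_lt_one_of_norm_add_sub_conj_add_mul_mul_lt hzw h
      exact ⟨w, z, hw, hzw.trans_lt hw, rfl⟩

lemma norm_sub_conj_mul_ofReal_sq (s : ℂ) (δ : ℝ) :
    ‖s - conj s * δ‖ ^ 2 = ((1 - δ) * s.re) ^ 2 + ((1 + δ) * s.im) ^ 2 := by
  rw [Complex.sq_norm, normSq_apply]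
  simp only [sub_re, sub_im, mul_re, mul_im, conj_re, conj_im, ofReal_re, ofReal_im]
  ring

lemma ellipse_iff_norm_sub_conj_mul_lt (s : ℂ) {δ : ℝ} (hδ₀ : -1 < δ) (hδ₁ : δ < 1) :
    s.re ^ 2 / (1 + δ) ^ 2 + s.im ^ 2 / (1 - δ) ^ 2 < 1 ↔ ‖s - conj s * δ‖ < 1 - ‖(δ : ℂ)‖ ^ 2 := by
  have h_add : 0 < 1 + δ := by linarith
  have h_sub : 0 < 1 - δ := by linarith
  rw [norm_real, Real.norm_eq_abs, sq_abs, ← sq_lt_sq₀ (norm_nonneg _) (by nlinarith),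
    norm_sub_conj_mul_ofReal_sq, div_add_div _ _ (by positivity) (by positivity),
    div_lt_one (by positivity)]
  constructor <;> intro h <;> nlinarith

/-- For `0 < δ < 1`, a point `s ∈ ℂ` lies in the open elliptical region `G_δ` if and only if
`(s, δ)` lies in the symmetrized bidisc `G = {(z+w, zw) : |z| < 1, |w| < 1}`. -/
theorem mem_ellipse_iff_mem_symmetrized_bidisc (δ : ℝ) (hδ0 : 0 < δ) (hδ1 : δ < 1) (s : ℂ) :
    s.re ^ 2 / (1 + δ) ^ 2 + s.im ^ 2 / (1 - δ) ^ 2 < 1 ↔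
      (s, (δ : ℂ)) ∈ {p : ℂ × ℂ | ∃ z w : ℂ, ‖z‖ < 1 ∧ ‖w‖ < 1 ∧
        p = (z + w, z * w)} := by
  rw [ellipse_iff_norm_sub_conj_mul_lt s (by linarith) hδ1]
  exact (mem_symmetrizedBidisc_iff s δ).symm
end

section
/- Let H be a Hilbert space, T a bounded operator on H, δ ∈ (0,1), and suppose A and Y are contractions on H with A self-adjoint, and T = 2√δ·A + (1-δ)·√(1+A)·Y·√(1-A). Then the numerical range W(T) = {⟨Tv, v⟩ : ‖v‖ = 1} is contained in the closed elliptical set K_δ = {x+iy : x²/(1+δ)² + y²/(1-δ)² ≤ 1}. -/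
/-!
For a unit vector `v` put `a = ⟪A v, v⟫` (real, as `A` is self-adjoint) and
`z = ⟪Y √(1-A) v, √(1+A) v⟫`, so that `⟪T v, v⟫ = 2√δ a + (1-δ) z`. Since
`‖√(1±A) v‖² = 1 ± a`, Cauchy–Schwarz gives `|z|² ≤ (1-a)(1+a)`, i.e. `a² + |z|² ≤ 1`.
As `(2√δ)² + (1-δ)² = (1+δ)²`, Cauchy–Schwarz in `ℝ²` bounds the real part,
`(Re ⟪T v, v⟫)² ≤ (1+δ)² (a² + (Re z)²)`, while `Im ⟪T v, v⟫ = (1-δ) Im z`.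
-/

open scoped InnerProductSpace

namespace IsSelfAdjoint
variable {A : Type*} [CStarAlgebra A] [PartialOrder A] [StarOrderedRing A] {a : A}

lemma one_sub_nonneg_of_norm_le_one (ha : IsSelfAdjoint a) (h : ‖a‖ ≤ 1) : 0 ≤ 1 - a := by
  have h1 : algebraMap ℝ A ‖a‖ ≤ 1 := by simpa using algebraMap_mono A h
  exact sub_nonneg.mpr (ha.le_algebraMap_norm_self.trans h1)

lemma one_add_nonneg_of_norm_le_one (ha : IsSelfAdjoint a) (h : ‖a‖ ≤ 1) : 0 ≤ 1 + a := by
  simpa [sub_neg_eq_add] using ha.neg.one_sub_nonneg_of_norm_le_one (by rwa [norm_neg])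

end IsSelfAdjoint

namespace ContinuousLinearMap
variable {H : Type*} [NormedAddCommGroup H] [InnerProductSpace ℂ H] [CompleteSpace H]

lemma norm_sqrt_apply_sq {P : H →L[ℂ] H} (hP : 0 ≤ P) (v : H) :
    ‖CFC.sqrt P v‖ ^ 2 = RCLike.re ⟪P v, v⟫_ℂ := by
  have hsa : IsSelfAdjoint (CFC.sqrt P) := IsSelfAdjoint.of_nonneg (CFC.sqrt_nonneg P)
  rw [apply_norm_sq_eq_inner_adjoint_left, ← star_eq_adjoint, hsa.star_eq, ← mul_def,
    CFC.sqrt_mul_sqrt_self P hP]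

lemma inner_mul_mul_apply_self {S : H →L[ℂ] H} (hS : IsSelfAdjoint S) (Y R : H →L[ℂ] H) (v : H) :
    ⟪(S * Y * R) v, v⟫_ℂ = ⟪Y (R v), S v⟫_ℂ :=
  (isSelfAdjoint_iff_isSymmetric.mp hS) _ _

lemma re_inner_sq_add_norm_inner_sqrt_mul_mul_sqrt_sq_le {A Y : H →L[ℂ] H}
    (hA : IsSelfAdjoint A) (hA1 : ‖A‖ ≤ 1) (hY : ‖Y‖ ≤ 1) (v : H) :
    (RCLike.re ⟪A v, v⟫_ℂ) ^ 2 + ‖⟪(CFC.sqrt (1 + A) * Y * CFC.sqrt (1 - A)) v, v⟫_ℂ‖ ^ 2 ≤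
      ‖v‖ ^ 4 := by
  set S := CFC.sqrt (1 + A)
  set R := CFC.sqrt (1 - A)
  have hS : ‖S v‖ ^ 2 = ‖v‖ ^ 2 + RCLike.re ⟪A v, v⟫_ℂ := by
    rw [norm_sqrt_apply_sq (hA.one_add_nonneg_of_norm_le_one hA1), add_apply, one_apply_eq_self,
      inner_add_left, map_add, inner_self_eq_norm_sq]
  have hR : ‖R v‖ ^ 2 = ‖v‖ ^ 2 - RCLike.re ⟪A v, v⟫_ℂ := by
    rw [norm_sqrt_apply_sq (hA.one_sub_nonneg_of_norm_le_one hA1), sub_apply, one_apply_eq_self,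
      inner_sub_left, map_sub, inner_self_eq_norm_sq]
  have hle : ‖⟪Y (R v), S v⟫_ℂ‖ ≤ ‖R v‖ * ‖S v‖ :=
    calc ‖⟪Y (R v), S v⟫_ℂ‖ ≤ ‖Y (R v)‖ * ‖S v‖ := norm_inner_le_norm _ _
      _ ≤ ‖R v‖ * ‖S v‖ := by gcongr; simpa using Y.le_of_opNorm_le hY (R v)
  rw [inner_mul_mul_apply_self (IsSelfAdjoint.of_nonneg (CFC.sqrt_nonneg _))]
  calc (RCLike.re ⟪A v, v⟫_ℂ) ^ 2 + ‖⟪Y (R v), S v⟫_ℂ‖ ^ 2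
      ≤ (RCLike.re ⟪A v, v⟫_ℂ) ^ 2 + ‖R v‖ ^ 2 * ‖S v‖ ^ 2 := by rw [← mul_pow]; gcongr
    _ = ‖v‖ ^ 4 := by rw [hS, hR]; ring

end ContinuousLinearMap

def Kdelta (δ : ℝ) : Set ℂ := {c : ℂ | c.re ^ 2 / (1 + δ) ^ 2 + c.im ^ 2 / (1 - δ) ^ 2 ≤ 1}

lemma smul_ofReal_add_smul_mem_Kdelta {δ a : ℝ} {z : ℂ} (hδ : 0 ≤ δ) (h : a ^ 2 + ‖z‖ ^ 2 ≤ 1) :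
    (2 * √δ) • (a : ℂ) + (1 - δ) • z ∈ Kdelta δ := by
  have hsq : √δ ^ 2 = δ := Real.sq_sqrt hδ
  have hz : ‖z‖ ^ 2 = z.re ^ 2 + z.im ^ 2 := by rw [Complex.sq_norm, Complex.normSq_apply]; ring
  have hre : (2 * √δ * a + (1 - δ) * z.re) ^ 2 / (1 + δ) ^ 2 ≤ a ^ 2 + z.re ^ 2 := by
    rw [div_le_iff₀ (by positivity)]
    nlinarith [sq_nonneg ((1 - δ) * a - 2 * √δ * z.re)]
  have him : ((1 - δ) * z.im) ^ 2 / (1 - δ) ^ 2 ≤ z.im ^ 2 := by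
    rw [mul_pow, mul_div_right_comm]
    exact mul_le_of_le_one_left (sq_nonneg _) (div_self_le_one _)
  simp only [Kdelta, Set.mem_ofPred_eq, Complex.add_re, Complex.add_im, Complex.smul_re,
    Complex.smul_im, Complex.ofReal_re, Complex.ofReal_im, smul_eq_mul, mul_zero, zero_add]
  linarith

theorem numericalRange_subset_Kdelta_of_Ando_form_general
    {H : Type*} [NormedAddCommGroup H] [InnerProductSpace ℂ H] [CompleteSpace H]
    (δ : ℝ) (hδ0 : 0 < δ) (A Y T : H →L[ℂ] H)
    (hA : ‖A‖ ≤ 1) (hY : ‖Y‖ ≤ 1) (hAsa : IsSelfAdjoint A)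
    (hT : T = (2 * Real.sqrt δ : ℝ) • A +
      (1 - δ : ℝ) • (CFC.sqrt (1 + A) * Y * CFC.sqrt (1 - A))) :
    ∀ v : H, ‖v‖ = 1 →
      (inner ℂ (T v) v : ℂ) ∈
        {c : ℂ | c.re ^ 2 / (1 + δ) ^ 2 + c.im ^ 2 / (1 - δ) ^ 2 ≤ 1} := by
  intro v hv
  have hAv : ⟪A v, v⟫_ℂ = (RCLike.re ⟪A v, v⟫_ℂ : ℂ) :=
    ((ContinuousLinearMap.isSelfAdjoint_iff_isSymmetric.mp hAsa).coe_reApplyInnerSelf_apply v).symm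
  have hTv : ⟪T v, v⟫_ℂ = (2 * √δ) • (RCLike.re ⟪A v, v⟫_ℂ : ℂ) +
      (1 - δ) • ⟪(CFC.sqrt (1 + A) * Y * CFC.sqrt (1 - A)) v, v⟫_ℂ := by
    rw [hT, add_apply, inner_add_left, smul_apply, smul_apply, inner_smul_left_eq_smul,
      inner_smul_left_eq_smul, ← hAv]
  rw [hTv]
  refine smul_ofReal_add_smul_mem_Kdelta hδ0.le ?_
  simpa [hv] using
    ContinuousLinearMap.re_inner_sq_add_norm_inner_sqrt_mul_mul_sqrt_sq_le hAsa hA hY v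

/-- If `A` and `Y` are contractions with `A` self-adjoint, and
`T = 2√δ A + (1-δ) √(1+A) Y √(1-A)`, then the numerical range of `T` is contained
in the closed elliptical set `K_δ`. -/
theorem numericalRange_subset_Kdelta_of_Ando_form
    {H : Type*} [NormedAddCommGroup H] [InnerProductSpace ℂ H] [CompleteSpace H]
    (δ : ℝ) (hδ0 : 0 < δ) (hδ1 : δ < 1) (A Y T : H →L[ℂ] H)
    (hA : ‖A‖ ≤ 1) (hY : ‖Y‖ ≤ 1) (hAsa : IsSelfAdjoint A)
    (hT : T = (2 * Real.sqrt δ : ℝ) • A +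
      (1 - δ : ℝ) • (CFC.sqrt (1 + A) * Y * CFC.sqrt (1 - A))) :
    ∀ v : H, ‖v‖ = 1 →
      (inner ℂ (T v) v : ℂ) ∈
        {c : ℂ | c.re ^ 2 / (1 + δ) ^ 2 + c.im ^ 2 / (1 - δ) ^ 2 ≤ 1} :=
  numericalRange_subset_Kdelta_of_Ando_form_general δ hδ0 A Y T hA hY hAsa hT
end

section
/- Let δ ∈ (0,1), t ∈ [-2√δ, 2√δ], and z ∈ ℂ with |z| ≤ (1-δ)√(1 - t²/(4δ)). Then t + z belongs to the closed elliptical set K_δ = {x+iy : x²/(1+δ)² + y²/(1-δ)² ≤ 1}. -/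
/-!
Write `z = x + iy`. With `a = 4δ` and `b = (1-δ)²` we have `a + b = (1+δ)²`, and the hypothesis
says `x² + y² ≤ b (1 - t²/a)`. By the Cauchy–Schwarz inequality in Engel form,
`(t + x)² / (a + b) ≤ t²/a + x²/b`, and adding `y²/b ≤ 1 - t²/a - x²/b` gives the ellipse inequality.
-/

theorem sq_add_le_mul_div_add_div {K : Type*} [Field K] [LinearOrder K] [IsStrictOrderedRing K]
    {a b : K} (ha : 0 < a) (hb : 0 < b) (u v : K) :
    (u + v) ^ 2 ≤ (a + b) * (u ^ 2 / a + v ^ 2 / b) := by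
  rw [div_add_div _ _ ha.ne' hb.ne', mul_div_assoc', le_div_iff₀ (mul_pos ha hb)]
  nlinarith [sq_nonneg (b * u - a * v)]

theorem sq_div_add_sq_div_le_one_of_sq_add_sq_le {K : Type*} [Field K] [LinearOrder K]
    [IsStrictOrderedRing K] {a b t x y : K} (ha : 0 < a) (hb : 0 < b)
    (h : x ^ 2 + y ^ 2 ≤ b * (1 - t ^ 2 / a)) :
    (t + x) ^ 2 / (a + b) + y ^ 2 / b ≤ 1 := by
  have hre : (t + x) ^ 2 / (a + b) ≤ t ^ 2 / a + x ^ 2 / b :=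
    (div_le_iff₀' (add_pos ha hb)).2 (sq_add_le_mul_div_add_div ha hb t x)
  have him : y ^ 2 / b ≤ 1 - t ^ 2 / a - x ^ 2 / b := by
    rw [div_le_iff₀ hb, sub_mul, sub_mul, div_mul_cancel₀ _ hb.ne']
    linarith
  linarith

/-- If `δ ∈ (0,1)`, `t ∈ [-2√δ, 2√δ]` and `|z| ≤ (1-δ)√(1 - t²/(4δ))`, then
`t + z ∈ K_δ`. -/
theorem add_mem_Kdelta_of_abs_le (δ t : ℝ) (hδ0 : 0 < δ) (hδ1 : δ < 1)
    (ht : t ∈ Set.Icc (-(2 * Real.sqrt δ)) (2 * Real.sqrt δ)) (z : ℂ)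
    (hz : ‖z‖ ≤ (1 - δ) * Real.sqrt (1 - t ^ 2 / (4 * δ))) :
    (t : ℂ) + z ∈ {c : ℂ | c.re ^ 2 / (1 + δ) ^ 2 + c.im ^ 2 / (1 - δ) ^ 2 ≤ 1} := by
  have ht_sq : t ^ 2 ≤ 4 * δ := by
    calc t ^ 2 ≤ (2 * Real.sqrt δ) ^ 2 := sq_le_sq' ht.1 ht.2
      _ = 4 * δ := by rw [mul_pow, Real.sq_sqrt hδ0.le]; norm_num
  have hs : 0 ≤ 1 - t ^ 2 / (4 * δ) := sub_nonneg.2 ((div_le_one (by positivity)).2 ht_sq)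
  have hz_sq : z.re ^ 2 + z.im ^ 2 ≤ (1 - δ) ^ 2 * (1 - t ^ 2 / (4 * δ)) :=
    calc z.re ^ 2 + z.im ^ 2 = ‖z‖ ^ 2 := by rw [Complex.sq_norm, Complex.normSq_apply]; ring
      _ ≤ ((1 - δ) * Real.sqrt (1 - t ^ 2 / (4 * δ))) ^ 2 := pow_le_pow_left₀ (norm_nonneg z) hz 2
      _ = (1 - δ) ^ 2 * (1 - t ^ 2 / (4 * δ)) := by rw [mul_pow, Real.sq_sqrt hs]
  have key := sq_div_add_sq_div_le_one_of_sq_add_sq_le (by positivity)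
    (pow_pos (sub_pos.2 hδ1) 2) hz_sq
  rw [show 4 * δ + (1 - δ) ^ 2 = (1 + δ) ^ 2 by ring] at key
  simpa using key
end

section
/- Let δ ∈ (0,1) and t ∈ [-4δ/(1+δ), 4δ/(1+δ)]. Then the closed disc centered at t of radius (1-δ)√(1 - t²/(4δ)) is contained in K_δ = {x+iy : x²/(1+δ)² + y²/(1-δ)² ≤ 1}. -/
/-!
On the disc, `y² ≤ (1-δ)²(1 - t²/(4δ)) - (x-t)²`, so the point lies in `K_δ` as soon as
`x²/(1+δ)² ≤ (x-t)²/(1-δ)² + t²/(4δ)`. The difference of the two sides is a perfect square in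
`x`: it equals `(4δx - (1+δ)²t)² / (4δ(1-δ)²(1+δ)²)`, because `4δ + (1-δ)² = (1+δ)²`.
-/

lemma sq_div_one_add_sq_le {δ : ℝ} (hδ0 : 0 < δ) (hδ1 : δ ≠ 1) (x t : ℝ) :
    x ^ 2 / (1 + δ) ^ 2 ≤ (x - t) ^ 2 / (1 - δ) ^ 2 + t ^ 2 / (4 * δ) := by
  have h1m : 1 - δ ≠ 0 := sub_ne_zero.mpr hδ1.symm
  have h1p : 1 + δ ≠ 0 := by positivity
  have hsquare : (x - t) ^ 2 / (1 - δ) ^ 2 + t ^ 2 / (4 * δ) - x ^ 2 / (1 + δ) ^ 2 =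
      (4 * δ * x - (1 + δ) ^ 2 * t) ^ 2 / (4 * δ * (1 - δ) ^ 2 * (1 + δ) ^ 2) := by
    field_simp
    ring
  have : 0 ≤ (4 * δ * x - (1 + δ) ^ 2 * t) ^ 2 / (4 * δ * (1 - δ) ^ 2 * (1 + δ) ^ 2) := by
    positivity
  linarith

lemma ellipse_le_one_of_sq_add_sq_le {δ x y t : ℝ} (hδ0 : 0 < δ) (hδ1 : δ ≠ 1)
    (h : (x - t) ^ 2 + y ^ 2 ≤ (1 - δ) ^ 2 * (1 - t ^ 2 / (4 * δ))) :
    x ^ 2 / (1 + δ) ^ 2 + y ^ 2 / (1 - δ) ^ 2 ≤ 1 := by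
  have h1m : 0 < (1 - δ) ^ 2 := sq_pos_of_ne_zero (sub_ne_zero.mpr hδ1.symm)
  have hy : y ^ 2 / (1 - δ) ^ 2 ≤ 1 - t ^ 2 / (4 * δ) - (x - t) ^ 2 / (1 - δ) ^ 2 := by
    rw [div_le_iff₀ h1m, sub_mul, div_mul_cancel₀ _ h1m.ne']
    linarith
  linarith [sq_div_one_add_sq_le hδ0 hδ1 x t]

lemma sq_le_four_mul_of_abs_le {δ t : ℝ} (hδ0 : 0 < δ) (ht : |t| ≤ 4 * δ / (1 + δ)) :
    t ^ 2 ≤ 4 * δ := by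
  have h1p : 0 < 1 + δ := by linarith
  have hsq : (4 * δ / (1 + δ)) ^ 2 ≤ 4 * δ := by
    rw [div_pow, div_le_iff₀ (by positivity)]
    nlinarith [sq_nonneg (1 - δ)]
  calc t ^ 2 = |t| ^ 2 := (sq_abs t).symm
    _ ≤ (4 * δ / (1 + δ)) ^ 2 := pow_le_pow_left₀ (abs_nonneg t) ht 2
    _ ≤ 4 * δ := hsq

/-- If `δ ∈ (0,1)` and `t ∈ [-4δ/(1+δ), 4δ/(1+δ)]`, then the closed disc centred at `t`
of radius `(1-δ)√(1 - t²/(4δ))` is contained in `K_δ`. -/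
theorem closedBall_subset_Kdelta_of_central (δ t : ℝ) (hδ0 : 0 < δ) (hδ1 : δ < 1)
    (ht : t ∈ Set.Icc (-(4 * δ / (1 + δ))) (4 * δ / (1 + δ))) :
    Metric.closedBall (t : ℂ) ((1 - δ) * Real.sqrt (1 - t ^ 2 / (4 * δ))) ⊆
      {c : ℂ | c.re ^ 2 / (1 + δ) ^ 2 + c.im ^ 2 / (1 - δ) ^ 2 ≤ 1} := by
  have hrad : 0 ≤ 1 - t ^ 2 / (4 * δ) := by
    rw [sub_nonneg, div_le_one (by positivity)]
    exact sq_le_four_mul_of_abs_le hδ0 (abs_le.mpr ht)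
  intro z hz
  rw [Metric.mem_closedBall, Complex.dist_eq] at hz
  apply ellipse_le_one_of_sq_add_sq_le hδ0 hδ1.ne
  calc (z.re - t) ^ 2 + z.im ^ 2 = ‖z - t‖ ^ 2 := by
        rw [Complex.sq_norm, Complex.normSq_apply]
        simp only [Complex.sub_re, Complex.ofReal_re, Complex.sub_im, Complex.ofReal_im, sub_zero]
        ring
    _ ≤ ((1 - δ) * Real.sqrt (1 - t ^ 2 / (4 * δ))) ^ 2 := pow_le_pow_left₀ (norm_nonneg _) hz 2
    _ = (1 - δ) ^ 2 * (1 - t ^ 2 / (4 * δ)) := by rw [mul_pow, Real.sq_sqrt hrad]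
end

section
/- Let δ ∈ (0,1) and t ∈ ℝ with 4δ/(1+δ) ≤ |t| ≤ 1+δ. Then the closed disc centered at t of radius 1+δ-|t| is contained in K_δ = {x+iy : x²/(1+δ)² + y²/(1-δ)² ≤ 1}. -/
/-
A disc centred on the major axis and touching the ellipse `x²/a² + y²/b² ≤ 1` at its vertex
`(a, 0)` lies inside the ellipse as soon as its radius `r` is at most the radius of curvature
`b²/a` there. Indeed, on the disc, `b²x² + a²y² - a²b²` is bounded by
`(a - x)(a²(x - a + 2r) - b²(x + a))`, whose second factor is linear in `x` and nonpositive at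
both ends `x = a - 2r` and `x = a` of the disc's shadow on the axis. With `a = 1 + δ` and
`b = 1 - δ`, the condition `r ≤ b²/a` is precisely `4δ/(1+δ) ≤ |t|`.
-/

open Metric

def ellipseRegion (a b : ℝ) : Set ℂ :=
  {z | z.re ^ 2 / a ^ 2 + z.im ^ 2 / b ^ 2 ≤ 1}

theorem mem_ellipseRegion_iff {a b : ℝ} (ha : 0 < a) (hb : 0 < b) (z : ℂ) :
    z ∈ ellipseRegion a b ↔ b ^ 2 * z.re ^ 2 + a ^ 2 * z.im ^ 2 ≤ a ^ 2 * b ^ 2 := by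
  rw [ellipseRegion, Set.mem_ofPred_eq, div_add_div _ _ (by positivity) (by positivity),
    div_le_one (by positivity)]
  constructor <;> intro h <;> linarith

theorem sq_le_of_mem_closedBall_ofReal {c r : ℝ} {z : ℂ} (hz : z ∈ closedBall (c : ℂ) r) :
    (z.re - c) ^ 2 + z.im ^ 2 ≤ r ^ 2 := by
  have hr : 0 ≤ r := nonempty_closedBall.mp ⟨z, hz⟩
  rw [mem_closedBall, Complex.dist_eq_re_im, Real.sqrt_le_left hr] at hz
  simpa using hz

theorem ellipse_bound_of_disc_at_vertex {a b r x y : ℝ} (hr : 0 ≤ r) (hra : r ≤ a)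
    (hab : a * r ≤ b ^ 2) (h : (x - (a - r)) ^ 2 + y ^ 2 ≤ r ^ 2) :
    b ^ 2 * x ^ 2 + a ^ 2 * y ^ 2 ≤ a ^ 2 * b ^ 2 := by
  have hx : x ≤ a := by nlinarith [sq_nonneg y, sq_nonneg (x - a)]
  have hx' : a - 2 * r ≤ x := by nlinarith [sq_nonneg y, sq_nonneg (x - a + 2 * r)]
  have chord : a ^ 2 * (x - a + 2 * r) ≤ b ^ 2 * (x + a) := by
    rcases le_total (b ^ 2) (a ^ 2) with hba | hab'
    · nlinarith [mul_nonneg (sub_nonneg.2 hx) (sub_nonneg.2 hba),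
        mul_le_mul_of_nonneg_left hab (hr.trans hra)]
    · nlinarith [mul_nonneg (sub_nonneg.2 hx') (sub_nonneg.2 hab'), sq_nonneg b]
  nlinarith [mul_nonneg (sub_nonneg.2 hx) (sub_nonneg.2 chord)]

theorem closedBall_subset_ellipseRegion {a b c r : ℝ} (ha : 0 < a) (hb : 0 < b) (hr : 0 ≤ r)
    (hc : |c| + r = a) (hab : a * r ≤ b ^ 2) : closedBall (c : ℂ) r ⊆ ellipseRegion a b := by
  intro z hz
  have hdisc := sq_le_of_mem_closedBall_ofReal hz
  rw [mem_ellipseRegion_iff ha hb]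
  rcases abs_cases c with ⟨hc', -⟩ | ⟨hc', -⟩
  · exact ellipse_bound_of_disc_at_vertex hr (by linarith [abs_nonneg c]) hab
      (by rw [← hc, hc']; simpa using hdisc)
  · have := ellipse_bound_of_disc_at_vertex (x := -z.re) hr (by linarith [abs_nonneg c]) hab
      (by rw [← hc, hc']; convert hdisc using 2; ring)
    simpa using this

/-- If `δ ∈ (0,1)` and `4δ/(1+δ) ≤ |t| ≤ 1+δ`, then the closed disc centred at `t` of
radius `1 + δ - |t|` is contained in `K_δ`. -/
theorem closedBall_subset_Kdelta_of_peripheral (δ t : ℝ) (hδ0 : 0 < δ) (hδ1 : δ < 1)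
    (ht1 : 4 * δ / (1 + δ) ≤ |t|) (ht2 : |t| ≤ 1 + δ) :
    Metric.closedBall (t : ℂ) (1 + δ - |t|) ⊆
      {c : ℂ | c.re ^ 2 / (1 + δ) ^ 2 + c.im ^ 2 / (1 - δ) ^ 2 ≤ 1} := by
  have ha : 0 < 1 + δ := by linarith
  have hcurv : (1 + δ) * (1 + δ - |t|) ≤ (1 - δ) ^ 2 := by
    nlinarith [(div_le_iff₀ ha).mp ht1]
  exact closedBall_subset_ellipseRegion ha (by linarith) (by linarith) (by ring) hcurv
end

section
/- Let δ ∈ (0,1), H a Hilbert space, and X a bounded invertible operator on H with ‖X‖ ≤ 1 and ‖X⁻¹‖ ≤ 1/δ. Let Q = X - δX⁻¹ and T = X + δX⁻¹. Then Q commutes with T, Q² = T² - 4δ, and the block operator Z = (1/2)[[T,Q],[Q,T]] on H ⊕ H satisfies ‖Z‖ ≤ 1. -/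
/-!
Since `T a + Q b = X (a + b) + δX⁻¹ (a - b)` and `Q a + T b = X (a + b) - δX⁻¹ (a - b)`,
`Z = U (X ⊕ δX⁻¹) U` with the unitary `U = 2^{-1/2} [[1, 1], [1, -1]]`. Concretely, the
parallelogram law applied twice gives `‖Z (a, b)‖² ≤ (‖a + b‖² + ‖a - b‖²) / 2 = ‖(a, b)‖²` as soon
as `X` and `δX⁻¹` are contractions. The two algebraic identities only use that `X` commutes with
its inverse.
-/

namespace Commute

variable {R : Type*} [Ring R] {a b : R}

theorem sub_add (h : Commute a b) : Commute (a - b) (a + b) :=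
  ((Commute.refl a).add_right h).sub_left (h.symm.add_right (Commute.refl b))

theorem sub_sq_eq_add_sq_sub (h : Commute a b) : (a - b) ^ 2 = (a + b) ^ 2 - 4 • (a * b) := by
  rw [h.sub_sq, h.add_sq]
  noncomm_ring

end Commute

theorem ContinuousLinearMap.norm_apply_le_of_opNorm_le_one {𝕜 E F : Type*}
    [NontriviallyNormedField 𝕜] [SeminormedAddCommGroup E] [SeminormedAddCommGroup F]
    [NormedSpace 𝕜 E] [NormedSpace 𝕜 F] {f : E →L[𝕜] F} (hf : ‖f‖ ≤ 1) (x : E) :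
    ‖f x‖ ≤ ‖x‖ :=
  (f.le_of_opNorm_le hf x).trans_eq (one_mul _)

section HadamardConjugate

variable {𝕜 H : Type*} [RCLike 𝕜] [NormedAddCommGroup H] [InnerProductSpace 𝕜 H]

theorem norm_half_add_sq_add_norm_half_sub_sq (x y : H) :
    ‖(2 : 𝕜)⁻¹ • (x + y)‖ ^ 2 + ‖(2 : 𝕜)⁻¹ • (x - y)‖ ^ 2 = (‖x‖ ^ 2 + ‖y‖ ^ 2) / 2 := by
  rw [norm_smul, norm_smul, mul_pow, mul_pow, ← mul_add, parallelogram_law_with_norm 𝕜]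
  simp only [norm_inv, RCLike.norm_ofNat]
  ring

theorem opNorm_le_one_of_hadamard_conj {A B : H →L[𝕜] H} (hA : ‖A‖ ≤ 1) (hB : ‖B‖ ≤ 1)
    (Z : WithLp 2 (H × H) →L[𝕜] WithLp 2 (H × H))
    (hZ : ∀ p : WithLp 2 (H × H), Z p = WithLp.toLp 2
      ((2 : 𝕜)⁻¹ • (A (p.fst + p.snd) + B (p.fst - p.snd)),
        (2 : 𝕜)⁻¹ • (A (p.fst + p.snd) - B (p.fst - p.snd)))) :
    ‖Z‖ ≤ 1 := by
  refine Z.opNorm_le_bound zero_le_one fun p => ?_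
  rw [one_mul, ← pow_le_pow_iff_left₀ (norm_nonneg _) (norm_nonneg _) two_ne_zero]
  calc ‖Z p‖ ^ 2 = (‖A (p.fst + p.snd)‖ ^ 2 + ‖B (p.fst - p.snd)‖ ^ 2) / 2 := by
        rw [hZ, WithLp.prod_norm_sq_eq_of_L2]
        exact norm_half_add_sq_add_norm_half_sub_sq _ _
    _ ≤ (‖p.fst + p.snd‖ ^ 2 + ‖p.fst - p.snd‖ ^ 2) / 2 := by
        gcongr
        · exact A.norm_apply_le_of_opNorm_le_one hA _
        · exact B.norm_apply_le_of_opNorm_le_one hB _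
    _ = ‖p‖ ^ 2 := by
        rw [parallelogram_law_with_norm 𝕜, WithLp.prod_norm_sq_eq_of_L2]
        ring

end HadamardConjugate

theorem douglasPaulsen_Z_contraction_general
    {H : Type*} [NormedAddCommGroup H] [InnerProductSpace ℂ H]
    (δ : ℝ) (hδ0 : 0 < δ) (X Y : H →L[ℂ] H)
    (hXY : X * Y = 1) (hYX : Y * X = 1) (hXn : ‖X‖ ≤ 1) (hYn : ‖Y‖ ≤ 1 / δ)
    (Z : WithLp 2 (H × H) →L[ℂ] WithLp 2 (H × H))
    (hZ : ∀ p : WithLp 2 (H × H),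
      WithLp.equiv 2 (H × H) (Z p) =
        ((2 : ℂ)⁻¹ • ((X + (δ : ℂ) • Y) ((WithLp.equiv 2 (H × H) p).1) +
            (X - (δ : ℂ) • Y) ((WithLp.equiv 2 (H × H) p).2)),
          (2 : ℂ)⁻¹ • ((X - (δ : ℂ) • Y) ((WithLp.equiv 2 (H × H) p).1) +
            (X + (δ : ℂ) • Y) ((WithLp.equiv 2 (H × H) p).2)))) :
    (X - (δ : ℂ) • Y) * (X + (δ : ℂ) • Y) = (X + (δ : ℂ) • Y) * (X - (δ : ℂ) • Y) ∧
      (X - (δ : ℂ) • Y) ^ 2 = (X + (δ : ℂ) • Y) ^ 2 - (4 * δ : ℂ) • 1 ∧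
      ‖Z‖ ≤ 1 := by
  have hXY_comm : Commute X Y := hXY.trans hYX.symm
  have hcomm : Commute X ((δ : ℂ) • Y) := hXY_comm.smul_right _
  have hδY : ‖(δ : ℂ) • Y‖ ≤ 1 := by
    rw [norm_smul, Complex.norm_real, Real.norm_of_nonneg hδ0.le]
    calc δ * ‖Y‖ ≤ δ * (1 / δ) := by gcongr
      _ = 1 := by field_simp
  refine ⟨hcomm.sub_add.eq, ?_, opNorm_le_one_of_hadamard_conj hXn hδY Z fun p => ?_⟩
  · rw [hcomm.sub_sq_eq_add_sq_sub, mul_smul_comm, hXY]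
    module
  · apply (WithLp.equiv 2 (H × H)).injective
    rw [hZ]
    simp only [WithLp.equiv_apply, WithLp.ofLp_fst, WithLp.ofLp_snd, add_apply, sub_apply,
      smul_apply, map_add, map_sub]
    ext <;> module

/-- If `X` is a Douglas-Paulsen operator with parameter `δ` (`‖X‖ ≤ 1`, `‖X⁻¹‖ ≤ 1/δ`),
`Q = X - δX⁻¹`, `T = X + δX⁻¹`, then `Q` commutes with `T`, `Q² = T² - 4δ`, and the block
operator `Z = (1/2)[[T,Q],[Q,T]]` on `H ⊕ H` is a contraction. -/
theorem douglasPaulsen_Z_contraction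
    {H : Type*} [NormedAddCommGroup H] [InnerProductSpace ℂ H]
    (δ : ℝ) (hδ0 : 0 < δ) (hδ1 : δ < 1) (X Y : H →L[ℂ] H)
    (hXY : X * Y = 1) (hYX : Y * X = 1) (hXn : ‖X‖ ≤ 1) (hYn : ‖Y‖ ≤ 1 / δ)
    (Z : WithLp 2 (H × H) →L[ℂ] WithLp 2 (H × H))
    (hZ : ∀ p : WithLp 2 (H × H),
      WithLp.equiv 2 (H × H) (Z p) =
        ((2 : ℂ)⁻¹ • ((X + (δ : ℂ) • Y) ((WithLp.equiv 2 (H × H) p).1) +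
            (X - (δ : ℂ) • Y) ((WithLp.equiv 2 (H × H) p).2)),
          (2 : ℂ)⁻¹ • ((X - (δ : ℂ) • Y) ((WithLp.equiv 2 (H × H) p).1) +
            (X + (δ : ℂ) • Y) ((WithLp.equiv 2 (H × H) p).2)))) :
    (X - (δ : ℂ) • Y) * (X + (δ : ℂ) • Y) = (X + (δ : ℂ) • Y) * (X - (δ : ℂ) • Y) ∧
      (X - (δ : ℂ) • Y) ^ 2 = (X + (δ : ℂ) • Y) ^ 2 - (4 * δ : ℂ) • 1 ∧
      ‖Z‖ ≤ 1 :=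
  douglasPaulsen_Z_contraction_general δ hδ0 X Y hXY hYX hXn hYn Z hZ
end

section
/- Let U be an operator on a Hilbert space K with ‖U‖ ≤ 1, and let H be a closed subspace of K with orthogonal projection P. Suppose T is an operator on H such that Tⁿ = P·Uⁿ|_H for all positive integers n (U is a power dilation of T). Then the smallest closed U-invariant subspace M containing H has the property that M ⊖ H is U-invariant; consequently H is a semi-invariant subspace for U. -/
/-!
Let `M` be the closed span of the orbit `⋃ₙ Uⁿ H`. Since `P Uⁿ h = Tⁿ h` for all `n ≥ 0`,
the continuous maps `P U` and `T P` agree on every `Uⁿ h`, hence on all of `M`. So if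
`x ∈ M ⊖ H` then `P (U x) = T (P x) = 0`, i.e. `U x ∈ M ⊖ H`. Finally `H = M ⊖ (M ⊖ H)`
because `H ≤ M`.
-/

open Submodule

namespace ContinuousLinearMap

section closedInvariantSpan

variable {R E : Type*} [Semiring R] [TopologicalSpace E] [AddCommMonoid E] [Module R E]
  [ContinuousAdd E] [ContinuousConstSMul R E]

/-- The smallest closed `U`-invariant submodule containing `s`. -/
def closedInvariantSpan (U : E →L[R] E) (s : Set E) : Submodule R E :=
  (span R (⋃ n : ℕ, (fun y : E => (U ^ n) y) '' s)).topologicalClosure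

variable (U : E →L[R] E) (s : Set E)

theorem isClosed_closedInvariantSpan : IsClosed (closedInvariantSpan U s : Set E) :=
  isClosed_topologicalClosure _

theorem subset_closedInvariantSpan : s ⊆ closedInvariantSpan U s := fun x hx =>
  le_topologicalClosure _ (subset_span (Set.mem_iUnion.2 ⟨0, x, hx, rfl⟩))

theorem mapsTo_closedInvariantSpan :
    Set.MapsTo U (closedInvariantSpan U s) (closedInvariantSpan U s) := by
  have hspan : span R (⋃ n : ℕ, (fun y : E => (U ^ n) y) '' s) ≤
      (closedInvariantSpan U s).comap (U : E →ₗ[R] E) := by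
    refine span_le.2 (Set.iUnion_subset fun n => ?_)
    rintro _ ⟨y, hy, rfl⟩
    change U ((U ^ n) y) ∈ closedInvariantSpan U s
    rw [← mul_apply_eq_comp, ← pow_succ']
    exact le_topologicalClosure _ (subset_span (Set.mem_iUnion.2 ⟨n + 1, y, hy, rfl⟩))
  exact topologicalClosure_minimal _ hspan
    ((isClosed_closedInvariantSpan U s).preimage U.continuous)

theorem comp_eqOn_closedInvariantSpan {F : Type*} [TopologicalSpace F] [AddCommMonoid F]
    [Module R F] [T2Space F] (P : E →L[R] F) (T : F →L[R] F)
    (hPT : ∀ x ∈ s, ∀ n : ℕ, P ((U ^ n) x) = (T ^ n) (P x)) :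
    Set.EqOn (P.comp U) (T.comp P) (closedInvariantSpan U s) := by
  refine eqOn_closure_span ?_
  simp only [Set.EqOn, Set.mem_iUnion]
  rintro _ ⟨n, y, hy, rfl⟩
  calc P (U ((U ^ n) y)) = (T ^ (n + 1)) (P y) := by
        rw [← mul_apply_eq_comp, ← pow_succ', hPT y hy]
    _ = T (P ((U ^ n) y)) := by rw [pow_succ', mul_apply_eq_comp, hPT y hy]

end closedInvariantSpan

end ContinuousLinearMap

namespace Submodule

variable {𝕜 E : Type*} [RCLike 𝕜] [NormedAddCommGroup E] [InnerProductSpace 𝕜 E]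
  {H : Submodule 𝕜 E} [H.HasOrthogonalProjection]

theorem apply_mem_orthogonal_of_intertwining {U : E →L[𝕜] E} {T : H →L[𝕜] H}
    {x : E} (hx : x ∈ Hᗮ)
    (hPU : H.orthogonalProjectionOnto (U x) = T (H.orthogonalProjectionOnto x)) :
    U x ∈ Hᗮ := by
  rw [← orthogonalProjectionOnto_eq_zero_iff] at hx ⊢
  rw [hPU, hx, map_zero]

theorem inf_orthogonal_inf_orthogonal_eq_of_le {M : Submodule 𝕜 E} (hHM : H ≤ M) :
    M ⊓ (M ⊓ Hᗮ)ᗮ = H := by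
  have hHN : H ≤ (M ⊓ Hᗮ)ᗮ := (le_orthogonal_orthogonal H).trans (orthogonal_le inf_le_right)
  calc M ⊓ (M ⊓ Hᗮ)ᗮ = (H ⊔ M ⊓ Hᗮ) ⊓ (M ⊓ Hᗮ)ᗮ := by
        rw [inf_comm M Hᗮ, sup_orthogonal_inf_of_hasOrthogonalProjection hHM]
    _ = H := by rw [sup_inf_assoc_of_le _ hHN, inf_orthogonal_eq_bot, sup_bot_eq]

end Submodule

open ContinuousLinearMap in
theorem sarason_semiinvariant_general
    {K : Type*} [NormedAddCommGroup K] [InnerProductSpace ℂ K]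
    (U : K →L[ℂ] K) (H : Submodule ℂ K) [CompleteSpace H]
    (T : H →L[ℂ] H)
    (hdil : ∀ (x : H) (n : ℕ), 1 ≤ n →
      H.orthogonalProjection ((U ^ n) (x : K)) = (T ^ n) x) :
    (∀ x ∈ (Submodule.span ℂ
          (⋃ n : ℕ, (fun y : K => (U ^ n) y) '' (H : Set K))).topologicalClosure ⊓ Hᗮ,
        U x ∈ (Submodule.span ℂ
          (⋃ n : ℕ, (fun y : K => (U ^ n) y) '' (H : Set K))).topologicalClosure ⊓ Hᗮ) ∧
      ∃ M₁ M₂ : Submodule ℂ K, IsClosed (M₁ : Set K) ∧ IsClosed (M₂ : Set K) ∧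
        (∀ x ∈ M₁, U x ∈ M₁) ∧ (∀ x ∈ M₂, U x ∈ M₂) ∧ H = M₂ ⊓ M₁ᗮ := by
  change (∀ x ∈ closedInvariantSpan U H ⊓ Hᗮ, U x ∈ closedInvariantSpan U H ⊓ Hᗮ) ∧ _
  set M := closedInvariantSpan U H
  have hPT : ∀ x ∈ (H : Set K), ∀ n : ℕ,
      H.orthogonalProjectionOnto ((U ^ n) x) = (T ^ n) (H.orthogonalProjectionOnto x) := by
    intro x hx n
    rcases n.eq_zero_or_pos with rfl | hn
    · simp
    · rw [orthogonalProjectionOnto_mem_subspace_eq_self ⟨x, hx⟩]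
      exact hdil ⟨x, hx⟩ n hn
  have hMU := mapsTo_closedInvariantSpan U (H : Set K)
  have hNU : ∀ x ∈ M ⊓ Hᗮ, U x ∈ M ⊓ Hᗮ := fun x ⟨hxM, hxH⟩ =>
    ⟨hMU hxM, apply_mem_orthogonal_of_intertwining hxH
      (comp_eqOn_closedInvariantSpan U _ _ T hPT hxM)⟩
  refine ⟨hNU, M ⊓ Hᗮ, M, ?_, isClosed_closedInvariantSpan U _, hNU, fun x hx => hMU hx, ?_⟩
  · exact (isClosed_closedInvariantSpan U _).inter (isClosed_orthogonal H)
  · exact (inf_orthogonal_inf_orthogonal_eq_of_le (subset_closedInvariantSpan U _)).symm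

/-- Sarason's lemma: if the contraction `U` on `K` is a power dilation of `T` on the closed
subspace `H`, then the smallest closed `U`-invariant subspace `M` containing `H` is such
that `M ⊖ H = M ⊓ Hᗮ` is `U`-invariant; consequently `H` is semi-invariant for `U`. -/
theorem sarason_semiinvariant
    {K : Type*} [NormedAddCommGroup K] [InnerProductSpace ℂ K] [CompleteSpace K]
    (U : K →L[ℂ] K) (hU : ‖U‖ ≤ 1) (H : Submodule ℂ K) [CompleteSpace H]
    (T : H →L[ℂ] H)
    (hdil : ∀ (x : H) (n : ℕ), 1 ≤ n →
      H.orthogonalProjection ((U ^ n) (x : K)) = (T ^ n) x) :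
    (∀ x ∈ (Submodule.span ℂ
          (⋃ n : ℕ, (fun y : K => (U ^ n) y) '' (H : Set K))).topologicalClosure ⊓ Hᗮ,
        U x ∈ (Submodule.span ℂ
          (⋃ n : ℕ, (fun y : K => (U ^ n) y) '' (H : Set K))).topologicalClosure ⊓ Hᗮ) ∧
      ∃ M₁ M₂ : Submodule ℂ K, IsClosed (M₁ : Set K) ∧ IsClosed (M₂ : Set K) ∧
        (∀ x ∈ M₁, U x ∈ M₁) ∧ (∀ x ∈ M₂, U x ∈ M₂) ∧ H = M₂ ⊓ M₁ᗮ :=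
  sarason_semiinvariant_general U H T hdil
end

section
/- Let δ ∈ (0,1), let T be an operator on a Hilbert space H with spectrum contained in K_δ = {x+iy : x²/(1+δ)² + y²/(1-δ)² ≤ 1}, and define G(z) = z·f'(z)·(T - f(z))⁻¹ for z ∈ 𝔻 \ {0}, where f(z) = 1/z + δz. Then G extends analytically to the open unit disc with G(0) = 1, and for all z ∈ 𝔻, (1/2)(G(z) + 1) = (1 - (z/2)T)·(1 - zT + δz²)⁻¹. -/
/-!
For `0 < ‖z‖ = r < 1` the map `f z = 1 / z + δ z` sends the circle of radius `r` onto the ellipse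
with semi-axes `1 / r + δ r > 1 + δ` and `1 / r - δ r > 1 - δ`, so `f z` lies outside `K_δ ⊇ σ(T)`
and `T - f z` is invertible. Since `1 - z T + δ z² = -z (T - f z)`, the pencil `1 - z T + δ z²` is
invertible on the whole disc (it is `1` at `z = 0`), and
`G z = (1 - δ z²) (1 - z T + δ z²)⁻¹` is the analytic extension; the final identity is algebra.
-/

theorem Ring.inverse_smul {𝕜 A : Type*} [Field 𝕜] [Ring A] [Algebra 𝕜 A] {c : 𝕜} (hc : c ≠ 0)
    (a : A) : Ring.inverse (c • a) = c⁻¹ • Ring.inverse a := by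
  by_cases ha : IsUnit a
  · have hca : IsUnit (c • a) := ha.smul (Units.mk0 c hc)
    rw [← mul_one (Ring.inverse (c • a)), Ring.inverse_mul_eq_iff_eq_mul _ _ _ hca,
      smul_mul_smul_comm, mul_inv_cancel₀ hc, Ring.mul_inverse_cancel a ha, one_smul]
  · have hca : ¬IsUnit (c • a) := fun h ↦ ha (by
      simpa only [Units.smul_def, Units.val_inv_eq_inv_val, Units.val_mk0, inv_smul_smul₀ hc]
        using h.smul (Units.mk0 c hc)⁻¹)
    rw [Ring.inverse_non_unit _ ha, Ring.inverse_non_unit _ hca, smul_zero]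

theorem one_lt_sq_mul_add_sq_mul {p q u v : ℝ} (hpq : p ^ 2 + q ^ 2 = 1) (hu : 1 < u)
    (hv : 1 < v) : 1 < p ^ 2 * u + q ^ 2 * v := by
  rcases eq_or_ne p 0 with rfl | hp
  · nlinarith
  · nlinarith [sq_pos_of_ne_zero hp, sq_nonneg q]

def closedEllipse (a b : ℝ) : Set ℂ := {c : ℂ | c.re ^ 2 / a ^ 2 + c.im ^ 2 / b ^ 2 ≤ 1}

theorem one_div_add_mul_notMem_closedEllipse {δ : ℝ} (hδ : |δ| < 1) {z : ℂ} (hz0 : z ≠ 0)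
    (hz1 : ‖z‖ < 1) : 1 / z + δ * z ∉ closedEllipse (1 + δ) (1 - δ) := by
  set r := ‖z‖
  obtain ⟨hδ₁, hδ₂⟩ := abs_lt.mp hδ
  have hr : 0 < r := norm_pos_iff.mpr hz0
  have hδr : |δ * r| < 1 := by rw [abs_mul, abs_of_pos hr]; nlinarith [abs_nonneg δ]
  obtain ⟨hδr₁, hδr₂⟩ := abs_lt.mp hδr
  have hnormSq : Complex.normSq z = r ^ 2 := Complex.normSq_eq_norm_sq z
  have hpq : (z.re / r) ^ 2 + (z.im / r) ^ 2 = 1 := by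
    rw [div_pow, div_pow, ← add_div, div_eq_one_iff_eq (by positivity), ← hnormSq,
      Complex.normSq_apply]
    ring
  have hre : (1 / z + δ * z).re ^ 2 / (1 + δ) ^ 2 =
      (z.re / r) ^ 2 * ((1 + δ * r ^ 2) / (r * (1 + δ))) ^ 2 := by
    simp only [Complex.add_re, one_div, Complex.inv_re, hnormSq, Complex.mul_re,
      Complex.ofReal_re, Complex.ofReal_im, zero_mul, sub_zero]
    have : 1 + δ ≠ 0 := by linarith
    field_simp
  have him : (1 / z + δ * z).im ^ 2 / (1 - δ) ^ 2 =
      (z.im / r) ^ 2 * ((1 - δ * r ^ 2) / (r * (1 - δ))) ^ 2 := by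
    simp only [Complex.add_im, one_div, Complex.inv_im, hnormSq, Complex.mul_im,
      Complex.ofReal_re, Complex.ofReal_im, zero_mul, add_zero]
    have : 1 - δ ≠ 0 := by linarith
    field_simp
    ring
  have hu : 1 < (1 + δ * r ^ 2) / (r * (1 + δ)) := by
    rw [one_lt_div (by nlinarith)]; nlinarith
  have hv : 1 < (1 - δ * r ^ 2) / (r * (1 - δ)) := by
    rw [one_lt_div (by nlinarith)]; nlinarith
  simp only [closedEllipse, Set.mem_ofPred_eq, not_le, hre, him]
  exact one_lt_sq_mul_add_sq_mul hpq (one_lt_pow₀ hu two_ne_zero) (one_lt_pow₀ hv two_ne_zero)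

section Algebra

variable {𝕜 A : Type*} [Field 𝕜] [Ring A] [Algebra 𝕜 A]

theorem isUnit_sub_smul_one_of_notMem_spectrum {a : A} {r : 𝕜} (h : r ∉ spectrum 𝕜 a) :
    IsUnit (a - r • 1) := by
  rw [← neg_sub, ← Algebra.algebraMap_eq_smul_one]
  exact (spectrum.notMem_iff.mp h).neg

theorem one_sub_smul_add_smul_one_eq (a : A) (c : 𝕜) {z : 𝕜} (hz : z ≠ 0) :
    1 - z • a + (c * z ^ 2) • (1 : A) = (-z) • (a - (1 / z + c * z) • 1) := by
  have : z * (1 / z + c * z) = 1 + c * z ^ 2 := by field_simp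
  rw [smul_sub, smul_smul, neg_mul, this]
  module

theorem isUnit_one_sub_smul_add_smul_one {a : A} {c z : 𝕜}
    (h : z ≠ 0 → IsUnit (a - (1 / z + c * z) • 1)) :
    IsUnit (1 - z • a + (c * z ^ 2) • (1 : A)) := by
  rcases eq_or_ne z 0 with rfl | hz
  · simp
  · rw [one_sub_smul_add_smul_one_eq a c hz]
    exact (h hz).smul (Units.mk0 (-z) (neg_ne_zero.mpr hz))

theorem ring_inverse_sub_smul_one (a : A) (c : 𝕜) {z : 𝕜} (hz : z ≠ 0) :
    Ring.inverse (a - (1 / z + c * z) • 1) =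
      (-z) • Ring.inverse (1 - z • a + (c * z ^ 2) • (1 : A)) := by
  have hz' : -z ≠ 0 := neg_ne_zero.mpr hz
  rw [one_sub_smul_add_smul_one_eq a c hz, Ring.inverse_smul hz', smul_inv_smul₀ hz']

theorem two_inv_smul_add_one [CharZero 𝕜] {a : A} {c z : 𝕜}
    (hb : IsUnit (1 - z • a + (c * z ^ 2) • (1 : A))) :
    (2 : 𝕜)⁻¹ • ((1 - c * z ^ 2) • Ring.inverse (1 - z • a + (c * z ^ 2) • (1 : A)) + 1) =
      (1 - (z / 2) • a) * Ring.inverse (1 - z • a + (c * z ^ 2) • (1 : A)) := by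
  set b := 1 - z • a + (c * z ^ 2) • (1 : A) with hb_def
  have hsum : (2 : 𝕜)⁻¹ • ((1 - c * z ^ 2) • (1 : A) + b) = 1 - (z / 2) • a := by
    rw [hb_def]; module
  rw [← hsum, smul_mul_assoc, add_mul, smul_mul_assoc, one_mul, Ring.mul_inverse_cancel b hb]

end Algebra

open Metric in
/-- If `σ(T) ⊆ K_δ` and `G(z) = z f'(z) (T - f(z))⁻¹` with `f(z) = 1/z + δz`, then `G`
extends analytically to the unit disc with `G(0) = 1`, and
`(1/2)(G(z)+1) = (1 - (z/2)T)(1 - zT + δz²)⁻¹` for all `z ∈ 𝔻`. -/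
theorem resolvent_function_extension
    {H : Type*} [NormedAddCommGroup H] [InnerProductSpace ℂ H] [CompleteSpace H]
    (δ : ℝ) (hδ0 : 0 < δ) (hδ1 : δ < 1) (T : H →L[ℂ] H)
    (hσ : spectrum ℂ T ⊆
      {c : ℂ | c.re ^ 2 / (1 + δ) ^ 2 + c.im ^ 2 / (1 - δ) ^ 2 ≤ 1}) :
    ∃ G : ℂ → (H →L[ℂ] H),
      DifferentiableOn ℂ G (Metric.ball (0 : ℂ) 1) ∧ G 0 = 1 ∧
      (∀ z ∈ Metric.ball (0 : ℂ) 1, z ≠ 0 →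
        IsUnit (T - (1 / z + (δ : ℂ) * z) • (1 : H →L[ℂ] H)) ∧
        G z = (z * (-(1 / z ^ 2) + (δ : ℂ))) •
          Ring.inverse (T - (1 / z + (δ : ℂ) * z) • (1 : H →L[ℂ] H))) ∧
      (∀ z ∈ Metric.ball (0 : ℂ) 1,
        IsUnit ((1 : H →L[ℂ] H) - z • T + ((δ : ℂ) * z ^ 2) • (1 : H →L[ℂ] H)) ∧
        (2 : ℂ)⁻¹ • (G z + 1) =
          (1 - (z / 2) • T) *
            Ring.inverse ((1 : H →L[ℂ] H) - z • T + ((δ : ℂ) * z ^ 2) • (1 : H →L[ℂ] H))) := by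
  have hδ : |δ| < 1 := abs_lt.mpr ⟨by linarith, hδ1⟩
  have hresolvent : ∀ z ∈ ball (0 : ℂ) 1, z ≠ 0 →
      IsUnit (T - (1 / z + (δ : ℂ) * z) • (1 : H →L[ℂ] H)) :=
    fun z hz hz0 ↦ isUnit_sub_smul_one_of_notMem_spectrum fun hmem ↦
      one_div_add_mul_notMem_closedEllipse hδ hz0 (mem_ball_zero_iff.mp hz) (hσ hmem)
  have hpencil : ∀ z ∈ ball (0 : ℂ) 1,
      IsUnit (1 - z • T + ((δ : ℂ) * z ^ 2) • (1 : H →L[ℂ] H)) :=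
    fun z hz ↦ isUnit_one_sub_smul_add_smul_one (hresolvent z hz)
  refine ⟨fun z ↦ (1 - (δ : ℂ) * z ^ 2) • Ring.inverse (1 - z • T + ((δ : ℂ) * z ^ 2) • 1),
    fun z hz ↦ ?_, by simp, fun z hz hz0 ↦ ⟨hresolvent z hz hz0, ?_⟩,
    fun z hz ↦ ⟨hpencil z hz, two_inv_smul_add_one (hpencil z hz)⟩⟩
  · fun_prop (disch := exact hpencil z hz)
  · rw [ring_inverse_sub_smul_one T _ hz0, smul_smul]
    dsimp only
    congr 1
    field_simp
    ring
end
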